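/- Every tribe, with its fibrations and homotopy equivalences as weak equivalences, is a fibration category; moreover every homomorphism of tribes (a functor preserving fibrations, anodyne morphisms, terminal objects and pullbacks along fibrations) is an exact functor of the underlying fibration categories. -/

import Mathlib

open CategoryTheory CategoryTheory.Limits

universe v u

namespace Paper

variable {T : Type u} [Category.{v} T]

/-- A morphism is anodyne (w.r.t. a class of fibrations) if it has the left
lifting property against all fibrations. -/
def Anodyne (Fib : MorphismProperty T) : MorphismProperty T :=
  fun _ _ i => ∀ ⦃u w : T⦄ (g : u ⟶ w), Fib g → HasLiftingProperty i g

/-- A tribe structure on a category `T`. -/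
structure TribeStruct (T : Type u) [Category.{v} T] where
  /-- fibrations -/
  Fib : MorphismProperty T
  fib_id : ∀ x : T, Fib (𝟙 x)
  fib_comp : ∀ {x y z : T} (f : x ⟶ y) (g : y ⟶ z), Fib f → Fib g → Fib (f ≫ g)
  /-- (T1): terminal object, all objects fibrant -/
  term : T
  isTerminal : IsTerminal term
  all_fibrant : ∀ x : T, Fib (isTerminal.from x)
  /-- (T2): pullbacks along fibrations exist and fibrations are stable -/
  pullback_exists : ∀ {x y z : T} (f : x ⟶ z) (g : y ⟶ z), Fib g → HasPullback f g
  fib_stable : ∀ {p x y z : T} {fst : p ⟶ x} {snd : p ⟶ y} {f : x ⟶ z} {g : y ⟶ z},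
    IsPullback fst snd f g → Fib g → Fib fst
  /-- (T3): factorization as anodyne followed by fibration -/
  factor : ∀ {x y : T} (f : x ⟶ y), ∃ (z : T) (i : x ⟶ z) (q : z ⟶ y),
    Anodyne Fib i ∧ Fib q ∧ i ≫ q = f
  /-- (T4): anodyne morphisms are stable under pullback along fibrations -/
  anodyne_stable : ∀ {p x y z : T} {fst : p ⟶ x} {snd : p ⟶ y} {f : x ⟶ z} {g : y ⟶ z},
    IsPullback fst snd f g → Anodyne Fib f → Fib g → Anodyne Fib snd

/-- A path object for `x` in a tribe: a factorization of the diagonal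
`x → x × x` as an anodyne morphism followed by a fibration (the product is
presented by an explicit binary product cone). -/
structure PathObject (R : TribeStruct T) (x : T) where
  P : T
  σ : x ⟶ P
  π₀ : P ⟶ x
  π₁ : P ⟶ x
  σ_anodyne : Anodyne R.Fib σ
  σ_π₀ : σ ≫ π₀ = 𝟙 x
  σ_π₁ : σ ≫ π₁ = 𝟙 x
  prod : T
  p₀ : prod ⟶ x
  p₁ : prod ⟶ x
  isProd : IsLimit (BinaryFan.mk p₀ p₁)
  π : P ⟶ prod
  π_p₀ : π ≫ p₀ = π₀
  π_p₁ : π ≫ p₁ = π₁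
  π_fib : R.Fib π

/-- Homotopy of morphisms in a tribe. -/
def Homotopic (R : TribeStruct T) {x y : T} (f g : x ⟶ y) : Prop :=
  ∃ (Po : PathObject R y) (H : x ⟶ Po.P), H ≫ Po.π₀ = f ∧ H ≫ Po.π₁ = g

/-- Homotopy equivalences in a tribe. -/
def IsHtpyEquiv (R : TribeStruct T) {x y : T} (f : x ⟶ y) : Prop :=
  ∃ g : y ⟶ x, Homotopic R (f ≫ g) (𝟙 x) ∧ Homotopic R (g ≫ f) (𝟙 y)

/-- Homotopy equivalences (= weak equivalences) of a tribe as a morphism property. -/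
def hW (R : TribeStruct T) : MorphismProperty T :=
  fun _ _ f => IsHtpyEquiv R f

/-- A fibration category structure on a category `C`. -/
structure FibCatStruct (C : Type u) [Category.{v} C] where
  /-- weak equivalences -/
  Weq : MorphismProperty C
  /-- fibrations -/
  Fib : MorphismProperty C
  weq_id : ∀ x : C, Weq (𝟙 x)
  weq_comp : ∀ {x y z : C} (f : x ⟶ y) (g : y ⟶ z), Weq f → Weq g → Weq (f ≫ g)
  fib_id : ∀ x : C, Fib (𝟙 x)
  fib_comp : ∀ {x y z : C} (f : x ⟶ y) (g : y ⟶ z), Fib f → Fib g → Fib (f ≫ g)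
  /-- (F1): terminal object, all objects fibrant -/
  term : C
  isTerminal : IsTerminal term
  all_fibrant : ∀ x : C, Fib (isTerminal.from x)
  /-- (F2): pullbacks along fibrations exist -/
  pullback_exists : ∀ {x y z : C} (f : x ⟶ z) (g : y ⟶ z), Fib g → HasPullback f g
  fib_stable : ∀ {p x y z : C} {fst : p ⟶ x} {snd : p ⟶ y} {f : x ⟶ z} {g : y ⟶ z},
    IsPullback fst snd f g → Fib g → Fib fst
  acyclic_fib_stable : ∀ {p x y z : C} {fst : p ⟶ x} {snd : p ⟶ y} {f : x ⟶ z} {g : y ⟶ z},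
    IsPullback fst snd f g → Fib g → Weq g → Weq fst
  /-- (F3): factorization as weak equivalence followed by fibration -/
  factor : ∀ {x y : C} (f : x ⟶ y), ∃ (z : C) (i : x ⟶ z) (q : z ⟶ y),
    Weq i ∧ Fib q ∧ i ≫ q = f
  /-- (F4): 2-out-of-6 for weak equivalences -/
  two_out_of_six : ∀ {a b c d : C} (f : a ⟶ b) (g : b ⟶ c) (h : c ⟶ d),
    Weq (f ≫ g) → Weq (g ≫ h) → Weq f ∧ Weq g ∧ Weq h ∧ Weq (f ≫ g ≫ h)


end Paper

/-!
Everything rests on one lifting fact: if `i` is anodyne and `i ≫ u = i ≫ v`, then `u` and `v`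
are homotopic through any path object, since `i` lifts against the fibration `π` of the path
object. This makes homotopy a congruence, so that homotopy equivalences are the maps inverted by
the quotient functor to the homotopy category; they inherit 2-out-of-3, 2-out-of-6 and stability
under retracts from the isomorphisms, and anodyne maps are among them.

For stability of acyclic fibrations under pullback, homotopy lifting gives every acyclic fibration
`g : y ⟶ z` a section, and factoring that section exhibits `g` as a retract over `z` of a fibration
with an anodyne section. Anodyne sections survive pullback along fibrations (T4), so a pullback of
`g` along a fibration is a retract of a map with an anodyne section; pullbacks along arbitrary maps
reduce to this by factoring the map as an anodyne map followed by a fibration.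

A homomorphism of tribes carries path objects to path objects, because the product in a path
object is a pullback over the terminal object along fibrations; hence it preserves homotopy.
-/

open CategoryTheory CategoryTheory.Limits MorphismProperty

universe v' u'

lemma CategoryTheory.isIso_of_isIso_comp_of_isIso_comp {C : Type*} [Category C] {a b c d : C}
    (f : a ⟶ b) (g : b ⟶ c) (h : c ⟶ d) [IsIso (f ≫ g)] [IsIso (g ≫ h)] : IsIso g := by
  have : Mono g := mono_of_mono g h
  have : IsSplitEpi g := IsSplitEpi.mk' ⟨inv (f ≫ g) ≫ f, by simp⟩
  exact isIso_of_mono_of_isSplitEpi g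

namespace Paper

variable {T : Type u} [Category.{v} T] {R : TribeStruct T}

lemma TribeStruct.exists_isPullback (R : TribeStruct T) {x y z : T} (f : x ⟶ z) {g : y ⟶ z}
    (hg : R.Fib g) : ∃ (P : T) (fst : P ⟶ x) (snd : P ⟶ y), IsPullback fst snd f g := by
  have := R.pullback_exists f g hg
  exact ⟨_, _, _, IsPullback.of_hasPullback f g⟩

/-- `k` is the base change of the anodyne section `σ` along the fibration `c`. -/
lemma TribeStruct.anodyne_of_isPullback_of_section {X Y Z P : T} {c : X ⟶ Y} {q : Z ⟶ Y}
    {σ : Y ⟶ Z} {fst : P ⟶ X} {snd : P ⟶ Z} (pb : IsPullback fst snd c q) (hc : R.Fib c)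
    (hσ : Anodyne R.Fib σ) (hσq : σ ≫ q = 𝟙 Y) {k : X ⟶ P} (hk₁ : k ≫ fst = 𝟙 X)
    (hk₂ : k ≫ snd = c ≫ σ) : Anodyne R.Fib k := by
  have outer : IsPullback c (k ≫ fst) (σ ≫ q) c := by
    rw [hk₁, hσq]
    exact IsPullback.id_vert c
  exact R.anodyne_stable (outer.of_bot hk₂.symm pb.flip) hσ (R.fib_stable pb.flip hc)

namespace PathObject

variable {y : T} (Po : PathObject R y)

lemma isPullback_prod : IsPullback Po.p₀ Po.p₁ (R.isTerminal.from y) (R.isTerminal.from y) :=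
  IsPullback.of_is_product' Po.isProd R.isTerminal

lemma fib_π₀ : R.Fib Po.π₀ :=
  Po.π_p₀ ▸ R.fib_comp _ _ Po.π_fib (R.fib_stable Po.isPullback_prod (R.all_fibrant y))

lemma fib_π₁ : R.Fib Po.π₁ :=
  Po.π_p₁ ▸ R.fib_comp _ _ Po.π_fib (R.fib_stable Po.isPullback_prod.flip (R.all_fibrant y))

lemma exists_lift_of_anodyne {a b : T} {i : a ⟶ b} (hi : Anodyne R.Fib i) (u v : b ⟶ y)
    (h : i ≫ u = i ≫ v) : ∃ H : b ⟶ Po.P, H ≫ Po.π₀ = u ∧ H ≫ Po.π₁ = v := by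
  have := hi Po.π Po.π_fib
  let uv : b ⟶ Po.prod := BinaryFan.IsLimit.lift Po.isProd u v
  have uv₀ : uv ≫ Po.p₀ = u := BinaryFan.IsLimit.lift_fst Po.isProd u v
  have uv₁ : uv ≫ Po.p₁ = v := BinaryFan.IsLimit.lift_snd Po.isProd u v
  have sq : CommSq (i ≫ u ≫ Po.σ) i Po.π uv := ⟨by
    apply BinaryFan.IsLimit.hom_ext Po.isProd
    · simp [Po.π_p₀, Po.σ_π₀, uv₀]
    · simp [Po.π_p₁, Po.σ_π₁, uv₁, h]⟩
  refine ⟨sq.lift, ?_, ?_⟩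
  · rw [← Po.π_p₀, sq.fac_right_assoc, uv₀]
  · rw [← Po.π_p₁, sq.fac_right_assoc, uv₁]

end PathObject

lemma TribeStruct.nonempty_pathObject (R : TribeStruct T) (y : T) :
    Nonempty (PathObject R y) := by
  obtain ⟨prod, p₀, p₁, pb⟩ := R.exists_isPullback (R.isTerminal.from y) (R.all_fibrant y)
  obtain ⟨P, σ, π, hσ, hπ, hσπ⟩ := R.factor (pb.lift (𝟙 y) (𝟙 y) (R.isTerminal.hom_ext _ _))
  exact ⟨{ P, σ, π, prod, p₀, p₁
           π₀ := π ≫ p₀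
           π₁ := π ≫ p₁
           σ_anodyne := hσ
           σ_π₀ := by simp [reassoc_of% hσπ]
           σ_π₁ := by simp [reassoc_of% hσπ]
           isProd := isProductOfIsTerminalIsPullback _ _ _ _ R.isTerminal pb.isLimit
           π_p₀ := rfl
           π_p₁ := rfl
           π_fib := hπ }⟩

lemma homotopic_of_anodyne {a b y : T} {i : a ⟶ b} (hi : Anodyne R.Fib i) {u v : b ⟶ y}
    (h : i ≫ u = i ≫ v) : Homotopic R u v := by
  obtain ⟨Po⟩ := R.nonempty_pathObject y
  obtain ⟨H, h₀, h₁⟩ := Po.exists_lift_of_anodyne hi u v h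
  exact ⟨Po, H, h₀, h₁⟩

namespace Homotopic

variable {w x y z : T}

-- `Anodyne R.Fib` unfolds to `R.Fib.llp`, whose API is used here and in `trans`.
lemma refl (f : x ⟶ y) : Homotopic R f f :=
  homotopic_of_anodyne (R.Fib.llp_of_isIso (𝟙 x)) rfl

lemma exists_lift (Po : PathObject R y) {f g : x ⟶ y} (h : Homotopic R f g) :
    ∃ H : x ⟶ Po.P, H ≫ Po.π₀ = f ∧ H ≫ Po.π₁ = g := by
  obtain ⟨Po', H, rfl, rfl⟩ := h
  obtain ⟨θ, h₀, h₁⟩ :=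
    Po.exists_lift_of_anodyne Po'.σ_anodyne Po'.π₀ Po'.π₁ (by rw [Po'.σ_π₀, Po'.σ_π₁])
  exact ⟨H ≫ θ, by simp [h₀], by simp [h₁]⟩

lemma symm {f g : x ⟶ y} (h : Homotopic R f g) : Homotopic R g f := by
  obtain ⟨Po, H, rfl, rfl⟩ := h
  obtain ⟨s, h₀, h₁⟩ :=
    Po.exists_lift_of_anodyne Po.σ_anodyne Po.π₁ Po.π₀ (by rw [Po.σ_π₀, Po.σ_π₁])
  exact ⟨Po, H ≫ s, by simp [h₀], by simp [h₁]⟩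

/-- Concatenation of paths: the constant path `σ` into `P ×_y P` is anodyne, so the two endpoint
maps `P ×_y P ⟶ y` are connected by a path. -/
lemma trans {f g h : x ⟶ y} (h₁ : Homotopic R f g) (h₂ : Homotopic R g h) :
    Homotopic R f h := by
  obtain ⟨Po, H₁, rfl, hH₁⟩ := h₁
  obtain ⟨H₂, hH₂, rfl⟩ := h₂.exists_lift Po
  obtain ⟨Q, fst, snd, pb⟩ := R.exists_isPullback Po.π₁ Po.fib_π₀
  let k : Po.P ⟶ Q := pb.lift (𝟙 _) (Po.π₁ ≫ Po.σ) (by simp [Po.σ_π₀])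
  have hk : Anodyne R.Fib k :=
    R.anodyne_of_isPullback_of_section pb Po.fib_π₁ Po.σ_anodyne Po.σ_π₀ (by simp [k])
      (by simp [k])
  obtain ⟨Γ, hΓ₀, hΓ₁⟩ := Po.exists_lift_of_anodyne (R.Fib.llp.comp_mem _ _ Po.σ_anodyne hk)
    (fst ≫ Po.π₀) (snd ≫ Po.π₁) (by simp [k, Po.σ_π₀, Po.σ_π₁])
  exact ⟨Po, pb.lift H₁ H₂ (hH₁.trans hH₂.symm) ≫ Γ, by simp [hΓ₀], by simp [hΓ₁]⟩

lemma comp_left (e : w ⟶ x) {f g : x ⟶ y} (h : Homotopic R f g) :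
    Homotopic R (e ≫ f) (e ≫ g) := by
  obtain ⟨Po, H, rfl, rfl⟩ := h
  exact ⟨Po, e ≫ H, by simp, by simp⟩

lemma comp_right {f g : x ⟶ y} (h : Homotopic R f g) (e : y ⟶ z) :
    Homotopic R (f ≫ e) (g ≫ e) := by
  obtain ⟨Po, H, rfl, rfl⟩ := h
  simpa using (homotopic_of_anodyne Po.σ_anodyne (u := Po.π₀ ≫ e) (v := Po.π₁ ≫ e)
    (by simp [reassoc_of% Po.σ_π₀, reassoc_of% Po.σ_π₁])).comp_left H

end Homotopic

def TribeStruct.homotopyRel (R : TribeStruct T) : HomRel T := fun _ _ f g => Homotopic R f g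

instance (R : TribeStruct T) : Congruence R.homotopyRel where
  equivalence := ⟨Homotopic.refl, Homotopic.symm, Homotopic.trans⟩
  comp_left := Homotopic.comp_left
  comp_right e h := h.comp_right e

abbrev TribeStruct.homotopyQuotient (R : TribeStruct T) : T ⥤ Quotient R.homotopyRel :=
  Quotient.functor _

lemma isHtpyEquiv_iff_isIso {x y : T} (f : x ⟶ y) :
    IsHtpyEquiv R f ↔ IsIso (R.homotopyQuotient.map f) := by
  have map_eq_iff {a b : T} (u v : a ⟶ b) := Quotient.functor_map_eq_iff R.homotopyRel u v
  constructor
  · rintro ⟨g, hfg, hgf⟩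
    refine ⟨R.homotopyQuotient.map g, ?_, ?_⟩
    · rw [← Functor.map_comp, ← R.homotopyQuotient.map_id, map_eq_iff]
      exact hfg
    · rw [← Functor.map_comp, ← R.homotopyQuotient.map_id, map_eq_iff]
      exact hgf
  · intro
    let g := R.homotopyQuotient.preimage (inv (R.homotopyQuotient.map f))
    refine ⟨g, (map_eq_iff _ _).1 ?_, (map_eq_iff _ _).1 ?_⟩ <;> simp [g]

lemma hW_eq_inverseImage (R : TribeStruct T) :
    hW R = (isomorphisms _).inverseImage R.homotopyQuotient := by
  ext x y f
  exact isHtpyEquiv_iff_isIso f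

instance (R : TribeStruct T) : (hW R).IsMultiplicative := by
  rw [hW_eq_inverseImage]
  infer_instance

instance (R : TribeStruct T) : (hW R).HasTwoOutOfThreeProperty := by
  rw [hW_eq_inverseImage]
  infer_instance

instance (R : TribeStruct T) : (hW R).IsStableUnderRetracts := by
  rw [hW_eq_inverseImage]
  infer_instance

lemma hW_two_out_of_six {a b c d : T} (f : a ⟶ b) (g : b ⟶ c) (h : c ⟶ d)
    (hfg : hW R (f ≫ g)) (hgh : hW R (g ≫ h)) :
    hW R f ∧ hW R g ∧ hW R h ∧ hW R (f ≫ g ≫ h) := by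
  have hg : hW R g := by
    rw [hW, isHtpyEquiv_iff_isIso, Functor.map_comp] at hfg hgh
    exact (isHtpyEquiv_iff_isIso g).2 (isIso_of_isIso_comp_of_isIso_comp
      (R.homotopyQuotient.map f) _ (R.homotopyQuotient.map h))
  have hf := (hW R).of_postcomp f g hg hfg
  have hh := (hW R).of_precomp g h hg hgh
  exact ⟨hf, hg, hh, (hW R).comp_mem _ _ hf ((hW R).comp_mem _ _ hg hh)⟩

lemma IsHtpyEquiv.of_anodyne {x y : T} {i : x ⟶ y} (hi : Anodyne R.Fib i) : IsHtpyEquiv R i := by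
  have := hi (R.isTerminal.from x) (R.all_fibrant x)
  have sq : CommSq (𝟙 x) i (R.isTerminal.from x) (R.isTerminal.from y) :=
    ⟨R.isTerminal.hom_ext _ _⟩
  refine ⟨sq.lift, by simpa using Homotopic.refl (𝟙 x), homotopic_of_anodyne hi ?_⟩
  simp

/-- Homotopy lifting: the lift is read off a lift of the anodyne map `E ⟶ E ×_B P` (the constant
paths) against `p`. -/
lemma TribeStruct.exists_lift_of_homotopic {E B X : T} {p : E ⟶ B} (hp : R.Fib p) {e : X ⟶ E}
    {b : X ⟶ B} (h : Homotopic R (e ≫ p) b) : ∃ e' : X ⟶ E, e' ≫ p = b := by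
  obtain ⟨Po, H, hH₀, rfl⟩ := h
  obtain ⟨Z, fst, snd, pb⟩ := R.exists_isPullback p Po.fib_π₀
  let j : E ⟶ Z := pb.lift (𝟙 E) (p ≫ Po.σ) (by simp [Po.σ_π₀])
  have hj : Anodyne R.Fib j :=
    R.anodyne_of_isPullback_of_section pb hp Po.σ_anodyne Po.σ_π₀ (by simp [j]) (by simp [j])
  have := hj p hp
  have sq : CommSq (𝟙 E) j p (snd ≫ Po.π₁) := ⟨by simp [j, Po.σ_π₁]⟩
  exact ⟨pb.lift e H hH₀.symm ≫ sq.lift, by simp⟩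

lemma TribeStruct.exists_section {E B : T} {p : E ⟶ B} (hp : R.Fib p) (he : IsHtpyEquiv R p) :
    ∃ s : B ⟶ E, s ≫ p = 𝟙 B := by
  obtain ⟨g, -, hg⟩ := he
  exact R.exists_lift_of_homotopic hp hg

lemma TribeStruct.exists_retract_of_anodyne_section {y z : T} {g : y ⟶ z} (hg : R.Fib g)
    (hge : IsHtpyEquiv R g) :
    ∃ (W : T) (r : W ⟶ z) (s : z ⟶ W) (i : y ⟶ W) (l : W ⟶ y), R.Fib r ∧ Anodyne R.Fib s ∧
      s ≫ r = 𝟙 z ∧ i ≫ r = g ∧ l ≫ g = r ∧ i ≫ l = 𝟙 y := by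
  obtain ⟨s', hs'⟩ := R.exists_section hg hge
  obtain ⟨W, a, m, ha, hm, rfl⟩ := R.factor s'
  have hs'e : IsHtpyEquiv R (a ≫ m) :=
    (hW R).of_postcomp (W' := hW R) _ g hge (by rw [hs']; exact (hW R).id_mem z)
  have hme : IsHtpyEquiv R m :=
    (hW R).of_precomp (W' := hW R) a m (IsHtpyEquiv.of_anodyne ha) hs'e
  obtain ⟨i, hi⟩ := R.exists_section hm hme
  exact ⟨W, m ≫ g, a, i, m, R.fib_comp _ _ hm hg, ha, by rw [← Category.assoc, hs'],
    by rw [reassoc_of% hi], rfl, hi⟩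

lemma TribeStruct.isHtpyEquiv_of_isPullback_of_anodyne_section {P M W z : T} {q : M ⟶ z}
    {r : W ⟶ z} {fst : P ⟶ M} {snd : P ⟶ W} (pb : IsPullback fst snd q r) (hq : R.Fib q)
    {s : z ⟶ W} (hs : Anodyne R.Fib s) (hsr : s ≫ r = 𝟙 z) : IsHtpyEquiv R fst := by
  let a := pb.lift (𝟙 M) (q ≫ s) (by simp [hsr])
  have ha : Anodyne R.Fib a :=
    R.anodyne_of_isPullback_of_section pb hq hs hsr (pb.lift_fst _ _ _) (pb.lift_snd _ _ _)
  exact (hW R).of_precomp (W' := hW R) a fst (IsHtpyEquiv.of_anodyne ha)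
    (by simpa [a] using (hW R).id_mem M)

lemma TribeStruct.isHtpyEquiv_of_isPullback_of_fib {P M y z : T} {q : M ⟶ z} {g : y ⟶ z}
    {fst : P ⟶ M} {snd : P ⟶ y} (pb : IsPullback fst snd q g) (hq : R.Fib q) (hg : R.Fib g)
    (hge : IsHtpyEquiv R g) : IsHtpyEquiv R fst := by
  obtain ⟨W, r, s, i, l, hr, hs, hsr, hir, hlg, hil⟩ := R.exists_retract_of_anodyne_section hg hge
  obtain ⟨V, fst', snd', pb'⟩ := R.exists_isPullback q hr
  have retract : RetractArrow fst fst' :=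
    { i := Arrow.homMk (pb'.lift fst (snd ≫ i) (by simp [pb.w, hir])) (𝟙 M)
      r := Arrow.homMk (pb.lift fst' (snd' ≫ l) (by simp [hlg, pb'.w])) (𝟙 M)
      retract := by
        ext
        · apply pb.hom_ext <;> simp [hil]
        · simp }
  exact (hW R).of_retract retract (R.isHtpyEquiv_of_isPullback_of_anodyne_section pb' hq hs hsr)

lemma TribeStruct.isHtpyEquiv_of_isPullback {P x y z : T} {f : x ⟶ z} {g : y ⟶ z}
    {fst : P ⟶ x} {snd : P ⟶ y} (pb : IsPullback fst snd f g) (hg : R.Fib g)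
    (hge : IsHtpyEquiv R g) : IsHtpyEquiv R fst := by
  obtain ⟨M, a, q, ha, hq, rfl⟩ := R.factor f
  obtain ⟨N, fst', snd', pb'⟩ := R.exists_isPullback q hg
  let t : P ⟶ N := pb'.lift (fst ≫ a) snd (by simp [pb.w])
  have pbt : IsPullback fst t a fst' :=
    IsPullback.of_bot (by simpa [t] using pb) (by simp [t]) pb'
  have ht : Anodyne R.Fib t := R.anodyne_stable pbt ha (R.fib_stable pb' hg)
  refine (hW R).of_postcomp (W' := hW R) fst a (IsHtpyEquiv.of_anodyne ha) ?_
  rw [pbt.w]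
  exact (hW R).comp_mem _ _ (IsHtpyEquiv.of_anodyne ht)
    (R.isHtpyEquiv_of_isPullback_of_fib pb' hq hg hge)

def TribeStruct.toFibCatStruct (R : TribeStruct T) : FibCatStruct T where
  Weq := hW R
  Fib := R.Fib
  weq_id := (hW R).id_mem
  weq_comp := (hW R).comp_mem
  fib_id := R.fib_id
  fib_comp := R.fib_comp
  term := R.term
  isTerminal := R.isTerminal
  all_fibrant := R.all_fibrant
  pullback_exists := R.pullback_exists
  fib_stable := R.fib_stable
  acyclic_fib_stable := R.isHtpyEquiv_of_isPullback
  factor f := by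
    obtain ⟨z, i, q, hi, hq, hiq⟩ := R.factor f
    exact ⟨z, i, q, .of_anodyne hi, hq, hiq⟩
  two_out_of_six := hW_two_out_of_six

structure TribeStruct.Hom {S : Type u'} [Category.{v'} S] (R : TribeStruct T)
    (R' : TribeStruct S) where
  functor : T ⥤ S
  map_fib {x y : T} (f : x ⟶ y) : R.Fib f → R'.Fib (functor.map f)
  map_anodyne {x y : T} (f : x ⟶ y) : Anodyne R.Fib f → Anodyne R'.Fib (functor.map f)
  isTerminal_obj_term : IsTerminal (functor.obj R.term)
  map_isPullback {p x y z : T} {fst : p ⟶ x} {snd : p ⟶ y} {f : x ⟶ z} {g : y ⟶ z} :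
    IsPullback fst snd f g → R.Fib g →
      IsPullback (functor.map fst) (functor.map snd) (functor.map f) (functor.map g)

namespace TribeStruct.Hom

variable {S : Type u'} [Category.{v'} S] {R' : TribeStruct S} (G : R.Hom R')

noncomputable def mapPathObject {y : T} (Po : PathObject R y) :
    PathObject R' (G.functor.obj y) where
  P := G.functor.obj Po.P
  σ := G.functor.map Po.σ
  π₀ := G.functor.map Po.π₀
  π₁ := G.functor.map Po.π₁
  σ_anodyne := G.map_anodyne _ Po.σ_anodyne
  σ_π₀ := by rw [← G.functor.map_comp, Po.σ_π₀, G.functor.map_id]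
  σ_π₁ := by rw [← G.functor.map_comp, Po.σ_π₁, G.functor.map_id]
  prod := G.functor.obj Po.prod
  p₀ := G.functor.map Po.p₀
  p₁ := G.functor.map Po.p₁
  isProd := isProductOfIsTerminalIsPullback _ _ _ _ G.isTerminal_obj_term
    (G.map_isPullback Po.isPullback_prod (R.all_fibrant y)).isLimit
  π := G.functor.map Po.π
  π_p₀ := by rw [← G.functor.map_comp, Po.π_p₀]
  π_p₁ := by rw [← G.functor.map_comp, Po.π_p₁]
  π_fib := G.map_fib _ Po.π_fib

lemma map_homotopic {x y : T} {f g : x ⟶ y} (h : Homotopic R f g) :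
    Homotopic R' (G.functor.map f) (G.functor.map g) := by
  obtain ⟨Po, H, rfl, rfl⟩ := h
  exact ⟨G.mapPathObject Po, G.functor.map H, (G.functor.map_comp _ _).symm,
    (G.functor.map_comp _ _).symm⟩

lemma map_isHtpyEquiv {x y : T} {f : x ⟶ y} (hf : IsHtpyEquiv R f) :
    IsHtpyEquiv R' (G.functor.map f) := by
  obtain ⟨g, hfg, hgf⟩ := hf
  refine ⟨G.functor.map g, ?_, ?_⟩
  · simpa using G.map_homotopic hfg
  · simpa using G.map_homotopic hgf

end TribeStruct.Hom

end Paper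

open Paper in
/-- Every tribe, with its fibrations and with homotopy
equivalences as weak equivalences, is a fibration category; moreover every
homomorphism of tribes (a functor preserving fibrations, anodyne morphisms,
terminal objects and pullbacks along fibrations) is an exact functor of the
underlying fibration categories, i.e. it moreover preserves the weak
equivalences (= homotopy equivalences). -/
theorem tribe_isFibCat_and_homomorphism_exact
    {T : Type u} [Category.{v} T] {S : Type u} [Category.{v} S]
    (R : Paper.TribeStruct T) (R' : Paper.TribeStruct S)
    (G : T ⥤ S)
    (hGfib : ∀ {x y : T} (f : x ⟶ y), R.Fib f → R'.Fib (G.map f))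
    (hGano : ∀ {x y : T} (f : x ⟶ y), Anodyne R.Fib f → Anodyne R'.Fib (G.map f))
    (hGterm : IsTerminal (G.obj R.term))
    (hGpb : ∀ {p x y z : T} {fst : p ⟶ x} {snd : p ⟶ y} {f : x ⟶ z} {g : y ⟶ z},
      IsPullback fst snd f g → R.Fib g →
      IsPullback (G.map fst) (G.map snd) (G.map f) (G.map g)) :
    (∃ F : Paper.FibCatStruct T, F.Fib = R.Fib ∧ F.Weq = hW R) ∧
    (∀ {x y : T} (f : x ⟶ y), IsHtpyEquiv R f → IsHtpyEquiv R' (G.map f)) := by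
  let Φ : R.Hom R' := ⟨G, hGfib, hGano, hGterm, hGpb⟩
  exact ⟨⟨R.toFibCatStruct, rfl, rfl⟩, fun _ hf => Φ.map_isHtpyEquiv hf⟩
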